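/- Let G be a network and let p ≠ q be vertices of G. Then even_res(p,q) = odd_res(p,q) if and only if every harmonic function u on G of finite energy satisfies u(p) = u(q). -/

import Mathlib

open scoped ENNReal
open Filter

variable {V : Type*}

/-- A *flow* on a graph: an antisymmetric function on ordered pairs of vertices
that vanishes on non-adjacent pairs. -/
def IsFlow (G : SimpleGraph V) (θ : V → V → ℝ) : Prop :=
  (∀ u v, θ u v = -θ v u) ∧ ∀ u v, ¬G.Adj u v → θ u v = 0

/-- The divergence (source strength) of a flow at a vertex. -/
noncomputable def divg (G : SimpleGraph V) [G.LocallyFinite] (θ : V → V → ℝ) (v : V) : ℝ :=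
  ∑ u ∈ G.neighborFinset v, θ v u

/-- The energy `(1/2) ∑ r(u,v) θ(u,v)²` dissipated by a flow, valued in `[0,∞]`. -/
noncomputable def energy (r θ : V → V → ℝ) : ℝ≥0∞ :=
  2⁻¹ * ∑' p : V × V, ENNReal.ofReal (r p.1 p.2 * θ p.1 p.2 ^ 2)

open Classical in
/-- The source distribution with a unit source at `p` and a unit sink at `q`. -/
noncomputable def pointSource (p q v : V) : ℝ :=
  if v = p then 1 else if v = q then -1 else 0

/-- The odd resistance: the infimum of the energy over all finite-energy unit
flows from `p` to `q`. -/
noncomputable def oddRes (G : SimpleGraph V) [G.LocallyFinite] (r : V → V → ℝ)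
    (p q : V) : ℝ≥0∞ :=
  ⨅ (θ : V → V → ℝ) (_ : IsFlow G θ ∧ energy r θ ≠ ⊤ ∧ divg G θ = pointSource p q),
    energy r θ

/-- The cut resistance: the infimum of the energy over all unit flows from `p` to `q`
vanishing on every edge with an endpoint outside `S`. -/
noncomputable def cutRes (G : SimpleGraph V) [G.LocallyFinite] (r : V → V → ℝ)
    (p q : V) (S : Finset V) : ℝ≥0∞ :=
  ⨅ (θ : V → V → ℝ) (_ : IsFlow G θ ∧ divg G θ = pointSource p q ∧
      ∀ u v, (u ∉ S ∨ v ∉ S) → θ u v = 0), energy r θ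

/-- The even resistance: the infimum of the cut resistances over all finite
vertex sets containing `p` and `q`. -/
noncomputable def evenRes (G : SimpleGraph V) [G.LocallyFinite] (r : V → V → ℝ)
    (p q : V) : ℝ≥0∞ :=
  ⨅ (S : Finset V) (_ : p ∈ S ∧ q ∈ S), cutRes G r p q S

/-- The short resistance: the infimum of the energy over all antisymmetric edge
functions supported on edges with at least one endpoint in `S` whose divergence
at every vertex of `S` is that of a unit flow from `p` to `q`. -/
noncomputable def shortRes (G : SimpleGraph V) [G.LocallyFinite] (r : V → V → ℝ)
    (p q : V) (S : Finset V) : ℝ≥0∞ :=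
  ⨅ (θ : V → V → ℝ) (_ : (∀ u v, θ u v = -θ v u) ∧ (∀ u v, ¬G.Adj u v → θ u v = 0) ∧
      (∀ u v, u ∉ S → v ∉ S → θ u v = 0) ∧
      ∀ v ∈ S, divg G θ v = pointSource p q v), energy r θ

/-- A function on the vertices of a network is harmonic if the net current it
induces out of each vertex is zero. -/
def Harmonic (G : SimpleGraph V) [G.LocallyFinite] (r : V → V → ℝ) (u : V → ℝ) : Prop :=
  ∀ v, ∑ w ∈ G.neighborFinset v, (u v - u w) / r v w = 0

open Classical in
/-- The Dirichlet energy `(1/2) ∑ (u(v)-u(w))²/r(v,w)` of a function on the vertices. -/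
noncomputable def fnEnergy (G : SimpleGraph V) (r : V → V → ℝ) (u : V → ℝ) : ℝ≥0∞ :=
  2⁻¹ * ∑' p : V × V,
    if G.Adj p.1 p.2 then ENNReal.ofReal ((u p.1 - u p.2) ^ 2 / r p.1 p.2) else 0

section NetAux

variable {V : Type*}

/-- The type of oriented edges of `G`. -/
abbrev NetE (G : SimpleGraph V) : Type _ := {x : V × V // G.Adj x.1 x.2}

/-- The weight `√(r/2)` of an oriented edge. -/
noncomputable def netw (G : SimpleGraph V) (r : V → V → ℝ) (e : NetE G) : ℝ :=
  Real.sqrt (r e.1.1 e.1.2 / 2)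

/-- The weighted `ℓ²` space of functions on oriented edges. -/
abbrev NetH (G : SimpleGraph V) : Type _ := lp (fun _ : NetE G => ℝ) 2

open Classical in
/-- The flow associated to an element of `NetH`. -/
noncomputable def toFlow (G : SimpleGraph V) (r : V → V → ℝ) (f : NetE G → ℝ) : V → V → ℝ :=
  fun a b => if h : G.Adj a b then f ⟨(a,b),h⟩ / netw G r ⟨(a,b),h⟩ else 0

/-- Antisymmetry for edge functions. -/
def NetAsym (G : SimpleGraph V) (f : NetE G → ℝ) : Prop :=
  ∀ a b (h : G.Adj a b), f ⟨(b,a),h.symm⟩ = - f ⟨(a,b),h⟩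

variable {G : SimpleGraph V} {r : V → V → ℝ}

lemma netw_pos (hr_pos : ∀ u v, G.Adj u v → 0 < r u v) (e : NetE G) : 0 < netw G r e :=
  Real.sqrt_pos.2 (by have := hr_pos _ _ e.2; linarith)

lemma netw_sq (hr_pos : ∀ u v, G.Adj u v → 0 < r u v) (e : NetE G) :
    netw G r e ^ 2 = r e.1.1 e.1.2 / 2 :=
  Real.sq_sqrt (by have := hr_pos _ _ e.2; linarith)

lemma netw_symm (hr_symm : ∀ u v, r u v = r v u) {a b : V} (h : G.Adj a b) :
    netw G r ⟨(b,a),h.symm⟩ = netw G r ⟨(a,b),h⟩ := by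
  simp only [netw, hr_symm b a]

lemma toFlow_adj (f : NetE G → ℝ) {a b : V} (h : G.Adj a b) :
    toFlow G r f a b = f ⟨(a,b),h⟩ / netw G r ⟨(a,b),h⟩ := dif_pos h

lemma toFlow_not_adj (f : NetE G → ℝ) {a b : V} (h : ¬ G.Adj a b) :
    toFlow G r f a b = 0 := dif_neg h

lemma toFlow_add (f g : NetE G → ℝ) (a b : V) :
    toFlow G r (f + g) a b = toFlow G r f a b + toFlow G r g a b := by
  by_cases h : G.Adj a b
  · simp [toFlow_adj _ h, add_div]
  · simp [toFlow_not_adj _ h]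

lemma toFlow_smul (c : ℝ) (f : NetE G → ℝ) (a b : V) :
    toFlow G r (c • f) a b = c * toFlow G r f a b := by
  by_cases h : G.Adj a b
  · simp [toFlow_adj _ h, mul_div_assoc]
  · simp [toFlow_not_adj _ h]

lemma toFlow_zero (a b : V) : toFlow G r (0 : NetE G → ℝ) a b = 0 := by
  by_cases h : G.Adj a b
  · simp [toFlow_adj _ h]
  · simp [toFlow_not_adj _ h]

lemma toFlow_antisym (hr_symm : ∀ u v, r u v = r v u) {f : NetE G → ℝ}
    (hf : NetAsym G f) (a b : V) : toFlow G r f b a = - toFlow G r f a b := by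
  by_cases h : G.Adj a b
  · rw [toFlow_adj _ h.symm, toFlow_adj _ h]
    have h1 : (⟨(b,a), h.symm⟩ : NetE G) = ⟨(b,a), (h.symm : G.Adj b a)⟩ := rfl
    rw [show f ⟨(b,a), h.symm⟩ = - f ⟨(a,b),h⟩ from hf a b h, netw_symm hr_symm h, neg_div]
  · rw [toFlow_not_adj _ h, toFlow_not_adj _ (fun hh => h hh.symm), neg_zero]

lemma isFlow_toFlow (hr_symm : ∀ u v, r u v = r v u) {f : NetE G → ℝ}
    (hf : NetAsym G f) : IsFlow G (toFlow G r f) :=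
  ⟨fun a b => toFlow_antisym hr_symm hf b a, fun a b h => toFlow_not_adj _ h⟩

lemma divg_toFlow_add [G.LocallyFinite] (f g : NetE G → ℝ) (v : V) :
    divg G (toFlow G r (f + g)) v = divg G (toFlow G r f) v + divg G (toFlow G r g) v := by
  simp only [divg, toFlow_add, Finset.sum_add_distrib]

lemma divg_toFlow_smul [G.LocallyFinite] (c : ℝ) (f : NetE G → ℝ) (v : V) :
    divg G (toFlow G r (c • f)) v = c * divg G (toFlow G r f) v := by
  simp only [divg, toFlow_smul, Finset.mul_sum]

end NetAux


section NetAux2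

variable {V : Type*} {G : SimpleGraph V} {r : V → V → ℝ}

open scoped ENNReal

lemma netE_coe : (NetE G) = ↥{x : V × V | G.Adj x.1 x.2} := rfl

lemma energy_eq_tsum (hr_pos : ∀ u v, G.Adj u v → 0 < r u v) {θ : V → V → ℝ}
    (h0 : ∀ a b, ¬G.Adj a b → θ a b = 0) :
    energy r θ = ∑' e : NetE G, ENNReal.ofReal ((netw G r e * θ e.1.1 e.1.2)^2) := by
  have hsupp : Function.support (fun x : V × V => ENNReal.ofReal (r x.1 x.2 * θ x.1 x.2 ^ 2))
      ⊆ {x : V × V | G.Adj x.1 x.2} := by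
    intro x hx
    by_contra hadj
    simp only [Function.mem_support] at hx
    exact hx (by rw [h0 _ _ hadj]; simp)
  unfold energy
  rw [← tsum_subtype_eq_of_support_subset hsupp, ← ENNReal.tsum_mul_left]
  refine tsum_congr fun e => ?_
  have hr : 0 < r e.1.1 e.1.2 := hr_pos _ _ e.2
  rw [mul_pow, netw_sq hr_pos]
  rw [show ENNReal.ofReal (r e.1.1 e.1.2 / 2 * θ e.1.1 e.1.2 ^ 2)
      = ENNReal.ofReal (2⁻¹ * (r e.1.1 e.1.2 * θ e.1.1 e.1.2 ^ 2)) by ring_nf,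
    ENNReal.ofReal_mul (by norm_num : (0:ℝ) ≤ 2⁻¹)]
  congr 1
  rw [show ((2:ℝ)⁻¹) = ((2:ℝ≥0∞).toReal)⁻¹ by norm_num, ← ENNReal.toReal_inv,
    ENNReal.ofReal_toReal (by simp)]

lemma summable_sq_of_mem (f : NetH G) : Summable (fun e : NetE G => (f e)^2) := by
  have h := (memℓp_gen_iff (by norm_num : 0 < (2:ℝ≥0∞).toReal)).1 (lp.memℓp f)
  convert h using 2 with e
  rw [show ((2:ℝ≥0∞).toReal) = ((2:ℕ):ℝ) by norm_num, Real.rpow_natCast]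
  rw [Real.norm_eq_abs, sq_abs]

lemma ofReal_norm_sq_eq (f : NetH G) :
    ENNReal.ofReal (‖f‖^2) = ∑' e : NetE G, ENNReal.ofReal ((f e)^2) := by
  have h1 : ‖f‖ ^ (2:ℝ≥0∞).toReal = ∑' e : NetE G, ‖f e‖ ^ (2:ℝ≥0∞).toReal :=
    lp.norm_rpow_eq_tsum (by norm_num) f
  have h2 : ‖f‖ ^ 2 = ∑' e : NetE G, (f e)^2 := by
    rw [show ((2:ℝ≥0∞).toReal) = ((2:ℕ):ℝ) by norm_num] at h1
    simp only [Real.rpow_natCast] at h1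
    simpa only [Real.norm_eq_abs, sq_abs] using h1
  rw [h2, ENNReal.ofReal_tsum_of_nonneg (fun e => sq_nonneg _) (summable_sq_of_mem f)]

lemma memℓp_of_tsum_ne_top {g : NetE G → ℝ}
    (h : (∑' e : NetE G, ENNReal.ofReal ((g e)^2)) ≠ ⊤) : Memℓp g 2 := by
  have h' : (∑' e : NetE G, (((g e)^2).toNNReal : ℝ≥0∞)) ≠ ⊤ := by
    convert h using 2 with e
    rfl
  have hs : Summable (fun e : NetE G => ((g e)^2).toNNReal) :=
    ENNReal.tsum_coe_ne_top_iff_summable.1 h'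
  have hs2 : Summable (fun e : NetE G => (g e)^2) := by
    have := NNReal.summable_coe.2 hs
    convert this using 2 with e
    rw [Real.coe_toNNReal _ (sq_nonneg _)]
  apply memℓp_gen
  convert hs2 using 2 with e
  rw [show ((2:ℝ≥0∞).toReal) = ((2:ℕ):ℝ) by norm_num, Real.rpow_natCast,
    Real.norm_eq_abs, sq_abs]

lemma ofFlow_toFlow (hr_pos : ∀ u v, G.Adj u v → 0 < r u v) (f : NetH G) (e : NetE G) :
    netw G r e * toFlow G r (⇑f) e.1.1 e.1.2 = f e := by
  obtain ⟨⟨a,b⟩,h⟩ := e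
  rw [toFlow_adj _ h, mul_div_cancel₀]
  exact (netw_pos hr_pos _).ne'

lemma energy_toFlow (hr_pos : ∀ u v, G.Adj u v → 0 < r u v) (f : NetH G) :
    energy r (toFlow G r ⇑f) = ENNReal.ofReal (‖f‖^2) := by
  rw [energy_eq_tsum hr_pos (fun a b h => toFlow_not_adj _ h), ofReal_norm_sq_eq]
  exact tsum_congr fun e => by rw [ofFlow_toFlow hr_pos]

/-- Any finite-energy flow comes from an element of `NetH`. -/
lemma exists_rep (hr_pos : ∀ u v, G.Adj u v → 0 < r u v) (hr_symm : ∀ u v, r u v = r v u)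
    {θ : V → V → ℝ} (hflow : IsFlow G θ) (hfin : energy r θ ≠ ⊤) :
    ∃ f : NetH G, toFlow G r ⇑f = θ ∧ energy r θ = ENNReal.ofReal (‖f‖^2) ∧
      NetAsym G (⇑f) ∧ ∀ e : NetE G, f e = netw G r e * θ e.1.1 e.1.2 := by
  set g : NetE G → ℝ := fun e => netw G r e * θ e.1.1 e.1.2 with hg
  have hmem : Memℓp g 2 := by
    apply memℓp_of_tsum_ne_top
    rwa [← energy_eq_tsum hr_pos hflow.2]
  set f : NetH G := ⟨g, hmem⟩ with hf
  have hcoe : ∀ e, (⇑f) e = g e := fun _ => rfl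
  refine ⟨f, ?_, ?_, ?_, ?_⟩
  · funext a b
    by_cases h : G.Adj a b
    · rw [toFlow_adj _ h, hcoe]
      simp only [hg]
      rw [mul_div_cancel_left₀ _ (netw_pos hr_pos _).ne']
    · rw [toFlow_not_adj _ h, hflow.2 _ _ h]
  · rw [ofReal_norm_sq_eq, energy_eq_tsum hr_pos hflow.2]
  · intro a b h
    rw [hcoe, hcoe]
    simp only [hg, netw_symm hr_symm h, hflow.1 b a]
    ring
  · intro e; rw [hcoe]

end NetAux2


section NetAux3

variable {V : Type*} {G : SimpleGraph V} {r : V → V → ℝ}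

open scoped ENNReal

variable (G r) in
/-- The space of sourceless finite-energy flows. -/
noncomputable def NetW [G.LocallyFinite] : Submodule ℝ (NetH G) where
  carrier := {f | NetAsym G ⇑f ∧ ∀ v, divg G (toFlow G r ⇑f) v = 0}
  add_mem' := by
    rintro f g ⟨hfa, hfd⟩ ⟨hga, hgd⟩
    have hco : ⇑(f + g) = ⇑f + ⇑g := lp.coeFn_add f g
    constructor
    · intro a b h
      simp only [hco, Pi.add_apply, hfa a b h, hga a b h]
      ring
    · intro v
      rw [hco, divg_toFlow_add, hfd v, hgd v, add_zero]
  zero_mem' := by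
    have hco : ⇑(0 : NetH G) = (0 : NetE G → ℝ) := lp.coeFn_zero _ _
    constructor
    · intro a b h; simp [hco]
    · intro v
      simp only [hco, divg]
      exact Finset.sum_eq_zero fun u _ => toFlow_zero _ _
  smul_mem' := by
    rintro c f ⟨hfa, hfd⟩
    have hco : ⇑(c • f) = c • ⇑f := lp.coeFn_smul c f
    constructor
    · intro a b h
      simp only [hco, Pi.smul_apply, smul_eq_mul, hfa a b h]
      ring
    · intro v
      rw [hco, divg_toFlow_smul, hfd v, mul_zero]

variable (G r) in
/-- Finitely supported sourceless flows. -/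
noncomputable def NetW0 [G.LocallyFinite] : Submodule ℝ (NetH G) where
  carrier := {f | f ∈ NetW G r ∧ (Function.support ⇑f).Finite}
  add_mem' := by
    rintro f g ⟨hf, hf2⟩ ⟨hg, hg2⟩
    refine ⟨(NetW G r).add_mem hf hg, ?_⟩
    refine Set.Finite.subset (hf2.union hg2) ?_
    rw [lp.coeFn_add]
    exact Function.support_add _ _
  zero_mem' := by
    refine ⟨(NetW G r).zero_mem, ?_⟩
    rw [lp.coeFn_zero]
    simp [Function.support_zero]
  smul_mem' := by
    rintro c f ⟨hf, hf2⟩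
    refine ⟨(NetW G r).smul_mem c hf, Set.Finite.subset hf2 ?_⟩
    rw [lp.coeFn_smul]
    exact Function.support_smul_subset_right _ _

lemma NetW0_le_NetW [G.LocallyFinite] : NetW0 G r ≤ NetW G r := fun _ hf => hf.1

lemma mem_NetW_iff [G.LocallyFinite] {f : NetH G} :
    f ∈ NetW G r ↔ NetAsym G ⇑f ∧ ∀ v, divg G (toFlow G r ⇑f) v = 0 := by
  constructor
  · intro h; exact h
  · intro h; exact h

lemma continuous_coord (e : NetE G) : Continuous (fun f : NetH G => f e) := by
  have : LipschitzWith 1 (fun f : NetH G => f e) := by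
    intro f g
    rw [edist_dist, edist_dist, dist_eq_norm, dist_eq_norm]
    have h1 : f e - g e = (f - g) e := by rw [lp.coeFn_sub]; rfl
    have h2 : ‖f e - g e‖ ≤ ‖f - g‖ := by
      rw [h1]; exact lp.norm_apply_le_norm (by norm_num) (f - g) e
    simp only [ENNReal.coe_one, one_mul]
    exact ENNReal.ofReal_le_ofReal h2
  exact this.continuous

lemma continuous_toFlow (a b : V) : Continuous (fun f : NetH G => toFlow G r ⇑f a b) := by
  by_cases h : G.Adj a b
  · simp only [toFlow, dif_pos h]
    exact (continuous_coord _).div_const _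
  · simp only [toFlow, dif_neg h]
    exact continuous_const

lemma continuous_divg [G.LocallyFinite] (v : V) :
    Continuous (fun f : NetH G => divg G (toFlow G r ⇑f) v) := by
  simp only [divg]
  exact continuous_finset_sum _ fun u _ => continuous_toFlow v u

lemma netW_closed [G.LocallyFinite] : IsClosed ((NetW G r : Set (NetH G))) := by
  have : (NetW G r : Set (NetH G)) =
      (⋂ (a : V) (b : V) (h : G.Adj a b),
        {f : NetH G | f ⟨(b,a),h.symm⟩ = - f ⟨(a,b),h⟩}) ∩
      ⋂ v : V, {f : NetH G | divg G (toFlow G r ⇑f) v = 0} := by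
    ext f
    simp only [SetLike.mem_coe, mem_NetW_iff, Set.mem_inter_iff, Set.mem_iInter,
      Set.mem_setOf_eq]
    rfl
  rw [this]
  refine IsClosed.inter ?_ (isClosed_iInter fun v => isClosed_eq (continuous_divg v)
    continuous_const)
  refine isClosed_iInter fun a => isClosed_iInter fun b => isClosed_iInter fun h =>
    isClosed_eq (continuous_coord _) ((continuous_coord _).neg)

end NetAux3


section NetAux4

variable {V : Type*} {G : SimpleGraph V} {r : V → V → ℝ}

open scoped ENNReal RealInnerProductSpace

open Classical in
/-- The elementary unit flow along an edge, as an element of `NetH`. -/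
noncomputable def edgeEl (G : SimpleGraph V) (r : V → V → ℝ) {a b : V} (h : G.Adj a b) :
    NetH G :=
  lp.single 2 ⟨(a,b),h⟩ (netw G r ⟨(a,b),h⟩) -
    lp.single 2 ⟨(b,a),h.symm⟩ (netw G r ⟨(b,a),h.symm⟩)

lemma netE_ne {a b x y : V} (h : G.Adj a b) (h' : G.Adj x y) (hne : ¬(x = a ∧ y = b)) :
    (⟨(x,y),h'⟩ : NetE G) ≠ ⟨(a,b),h⟩ := by
  intro hc
  have := congrArg Subtype.val hc
  simp only [Prod.mk.injEq] at this
  exact hne this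

lemma edgeEl_apply_ab {a b : V} (h : G.Adj a b) :
    edgeEl G r h ⟨(a,b),h⟩ = netw G r ⟨(a,b),h⟩ := by
  classical
  have hne : (⟨(a,b),h⟩ : NetE G) ≠ ⟨(b,a),h.symm⟩ :=
    netE_ne h.symm h (fun hc => h.ne hc.1)
  simp only [edgeEl, lp.coeFn_sub, Pi.sub_apply]
  rw [lp.single_apply_self, lp.single_apply_ne _ _ _ hne, sub_zero]

lemma edgeEl_apply_ba {a b : V} (h : G.Adj a b) :
    edgeEl G r h ⟨(b,a),h.symm⟩ = -netw G r ⟨(b,a),h.symm⟩ := by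
  classical
  have hne : (⟨(b,a),h.symm⟩ : NetE G) ≠ ⟨(a,b),h⟩ :=
    netE_ne h h.symm (fun hc => h.ne hc.2)
  simp only [edgeEl, lp.coeFn_sub, Pi.sub_apply]
  rw [lp.single_apply_self, lp.single_apply_ne _ _ _ hne, zero_sub]

lemma edgeEl_apply_other {a b : V} (h : G.Adj a b) {e : NetE G}
    (h1 : e ≠ ⟨(a,b),h⟩) (h2 : e ≠ ⟨(b,a),h.symm⟩) : edgeEl G r h e = 0 := by
  classical
  simp only [edgeEl, lp.coeFn_sub, Pi.sub_apply]
  rw [lp.single_apply_ne _ _ _ h1, lp.single_apply_ne _ _ _ h2, sub_zero]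

lemma edgeEl_support {a b : V} (h : G.Adj a b) :
    Function.support (⇑(edgeEl G r h)) ⊆ {(⟨(a,b),h⟩ : NetE G), ⟨(b,a),h.symm⟩} := by
  intro e he
  simp only [Function.mem_support] at he
  by_contra hc
  simp only [Set.mem_insert_iff, Set.mem_singleton_iff, not_or] at hc
  exact he (edgeEl_apply_other h hc.1 hc.2)

open Classical in
lemma toFlow_edgeEl (hr_pos : ∀ u v, G.Adj u v → 0 < r u v) {a b : V} (h : G.Adj a b)
    (x y : V) : toFlow G r (⇑(edgeEl G r h)) x y =
      (if x = a ∧ y = b then 1 else 0) - (if x = b ∧ y = a then (1:ℝ) else 0) := by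
  have hab : a ≠ b := h.ne
  by_cases h1 : x = a ∧ y = b
  · obtain ⟨h1a, h1b⟩ := h1
    subst h1a; subst h1b
    have h2 : ¬(x = y ∧ y = x) := fun hc => hab hc.1
    rw [if_pos ⟨rfl, rfl⟩, if_neg h2, toFlow_adj _ h, edgeEl_apply_ab h,
      div_self (netw_pos hr_pos _).ne']
    norm_num
  · rw [if_neg h1]
    by_cases h2 : x = b ∧ y = a
    · obtain ⟨h2a, h2b⟩ := h2
      subst h2a; subst h2b
      rw [if_pos ⟨rfl, rfl⟩, toFlow_adj _ h.symm, edgeEl_apply_ba h, neg_div,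
        div_self (netw_pos hr_pos _).ne', zero_sub]
    · rw [if_neg h2, sub_zero]
      by_cases hadj : G.Adj x y
      · rw [toFlow_adj _ hadj, edgeEl_apply_other h (netE_ne h hadj h1)
          (netE_ne h.symm hadj h2), zero_div]
      · exact toFlow_not_adj _ hadj

open Classical in
lemma divg_toFlow_edgeEl [G.LocallyFinite] (hr_pos : ∀ u v, G.Adj u v → 0 < r u v)
    {a b : V} (h : G.Adj a b) (v : V) :
    divg G (toFlow G r (⇑(edgeEl G r h))) v =
      (if v = a then 1 else 0) - (if v = b then 1 else 0) := by
  classical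
  have hab : a ≠ b := h.ne
  unfold divg
  have hsum : ∀ u ∈ G.neighborFinset v, toFlow G r (⇑(edgeEl G r h)) v u =
      ((if v = a then 1 else 0) * if u = b then 1 else 0)
        - ((if v = b then 1 else 0) * if u = a then (1:ℝ) else 0) := by
    intro u _
    rw [toFlow_edgeEl hr_pos h]
    congr 1
    · by_cases h1 : v = a ∧ u = b
      · rw [if_pos h1, if_pos h1.1, if_pos h1.2, one_mul]
      · rw [if_neg h1]
        rcases not_and_or.1 h1 with h2 | h2
        · rw [if_neg h2, zero_mul]
        · rw [if_neg h2, mul_zero]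
    · by_cases h1 : v = b ∧ u = a
      · rw [if_pos h1, if_pos h1.1, if_pos h1.2, one_mul]
      · rw [if_neg h1]
        rcases not_and_or.1 h1 with h2 | h2
        · rw [if_neg h2, zero_mul]
        · rw [if_neg h2, mul_zero]
  rw [Finset.sum_congr rfl hsum, Finset.sum_sub_distrib, ← Finset.mul_sum, ← Finset.mul_sum,
    Finset.sum_ite_eq' _ b (fun _ => (1:ℝ)), Finset.sum_ite_eq' _ a (fun _ => (1:ℝ))]
  by_cases hva : v = a
  · have hb : b ∈ G.neighborFinset v := by rw [SimpleGraph.mem_neighborFinset, hva]; exact h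
    have hvb : v ≠ b := fun hc => hab (hva ▸ hc ▸ rfl)
    rw [if_pos hva, if_pos hb, if_neg hvb]
    ring
  · rw [if_neg hva]
    by_cases hvb : v = b
    · have ha : a ∈ G.neighborFinset v := by
        rw [SimpleGraph.mem_neighborFinset, hvb]; exact h.symm
      rw [if_pos hvb, if_pos ha]
      ring
    · rw [if_neg hvb]
      ring

lemma netAsym_edgeEl (hr_pos : ∀ u v, G.Adj u v → 0 < r u v)
    (hr_symm : ∀ u v, r u v = r v u) {a b : V} (h : G.Adj a b) :
    NetAsym G (⇑(edgeEl G r h)) := by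
  classical
  intro x y hxy
  rw [← ofFlow_toFlow hr_pos (edgeEl G r h) ⟨(y,x),hxy.symm⟩,
    ← ofFlow_toFlow hr_pos (edgeEl G r h) ⟨(x,y),hxy⟩]
  simp only
  rw [netw_symm hr_symm hxy, toFlow_edgeEl hr_pos h, toFlow_edgeEl hr_pos h]
  have : (if y = a ∧ x = b then (1:ℝ) else 0) = (if x = b ∧ y = a then 1 else 0) := by
    by_cases hc : y = a ∧ x = b
    · rw [if_pos hc, if_pos ⟨hc.2, hc.1⟩]
    · rw [if_neg hc, if_neg (fun hd => hc ⟨hd.2, hd.1⟩)]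
  have h2 : (if y = b ∧ x = a then (1:ℝ) else 0) = (if x = a ∧ y = b then 1 else 0) := by
    by_cases hc : y = b ∧ x = a
    · rw [if_pos hc, if_pos ⟨hc.2, hc.1⟩]
    · rw [if_neg hc, if_neg (fun hd => hc ⟨hd.2, hd.1⟩)]
  rw [this, h2]
  ring

/-- The unit flow along a walk, as an element of `NetH`. -/
noncomputable def walkEl (G : SimpleGraph V) (r : V → V → ℝ) :
    ∀ {a b : V}, G.Walk a b → NetH G
  | _, _, SimpleGraph.Walk.nil => 0
  | _, _, SimpleGraph.Walk.cons h w => edgeEl G r h + walkEl G r w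

lemma walkEl_support_finite {a b : V} (w : G.Walk a b) :
    (Function.support (⇑(walkEl G r w))).Finite := by
  induction w with
  | nil => rw [walkEl, lp.coeFn_zero]; simp
  | cons h w ih =>
    rw [walkEl, lp.coeFn_add]
    refine Set.Finite.subset (Set.Finite.union ?_ ih) (Function.support_add _ _)
    exact Set.Finite.subset (by simp) (edgeEl_support h)

lemma netAsym_walkEl (hr_pos : ∀ u v, G.Adj u v → 0 < r u v)
    (hr_symm : ∀ u v, r u v = r v u) {a b : V} (w : G.Walk a b) :
    NetAsym G (⇑(walkEl G r w)) := by
  induction w with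
  | nil =>
    intro x y hxy
    rw [walkEl, lp.coeFn_zero]
    simp
  | cons h w ih =>
    intro x y hxy
    rw [walkEl, lp.coeFn_add]
    simp only [Pi.add_apply, netAsym_edgeEl hr_pos hr_symm h x y hxy, ih x y hxy]
    ring

open Classical in
lemma divg_toFlow_walkEl [G.LocallyFinite] (hr_pos : ∀ u v, G.Adj u v → 0 < r u v)
    {a b : V} (w : G.Walk a b) (v : V) :
    divg G (toFlow G r (⇑(walkEl G r w))) v =
      (if v = a then 1 else 0) - (if v = b then 1 else 0) := by
  classical
  induction w with
  | nil =>
    rw [walkEl, lp.coeFn_zero, sub_self]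
    exact Finset.sum_eq_zero fun u _ => toFlow_zero _ _
  | cons h w ih =>
    rw [walkEl, lp.coeFn_add, divg_toFlow_add, divg_toFlow_edgeEl hr_pos, ih]
    ring

lemma walkEl_append {a b c : V} (w1 : G.Walk a b) (w2 : G.Walk b c) :
    walkEl G r (w1.append w2) = walkEl G r w1 + walkEl G r w2 := by
  induction w1 with
  | nil => rw [SimpleGraph.Walk.nil_append, walkEl, zero_add]
  | cons h w ih => rw [SimpleGraph.Walk.cons_append, walkEl, walkEl, ih, add_assoc]

lemma inner_edgeEl_left (hr_pos : ∀ u v, G.Adj u v → 0 < r u v)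
    (hr_symm : ∀ u v, r u v = r v u) {a b : V} (h : G.Adj a b) {ζ : NetH G}
    (hζ : NetAsym G ⇑ζ) : ⟪edgeEl G r h, ζ⟫ = r a b * toFlow G r (⇑ζ) a b := by
  classical
  rw [edgeEl, inner_sub_left, lp.inner_single_left, lp.inner_single_left]
  simp only [RCLike.inner_apply, starRingEnd_apply, star_trivial]
  rw [hζ a b h, netw_symm hr_symm h, toFlow_adj _ h]
  have hw : netw G r ⟨(a,b),h⟩ ≠ 0 := (netw_pos hr_pos _).ne'
  have hr2 : r a b = 2 * (netw G r ⟨(a,b),h⟩)^2 := by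
    have := netw_sq hr_pos (⟨(a,b),h⟩ : NetE G)
    simp only at this
    linarith
  rw [hr2]
  field_simp
  ring

end NetAux4



section NetAux5

variable {V : Type*} {G : SimpleGraph V} {r : V → V → ℝ}

open scoped ENNReal RealInnerProductSpace

/-- Summation by parts. -/
lemma inner_eq_sum_parts [G.LocallyFinite] (hr_pos : ∀ u v, G.Adj u v → 0 < r u v)
    (hr_symm : ∀ u v, r u v = r v u) (f g : NetH G)
    (hfin : (Function.support ⇑f).Finite) (hfa : NetAsym G ⇑f) (u : V → ℝ)
    (hg : ∀ e : NetE G, g e = netw G r e * ((u e.1.1 - u e.1.2) / r e.1.1 e.1.2))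
    (T : Finset V) (hT : ∀ e : NetE G, f e ≠ 0 → e.1.1 ∈ T ∧ e.1.2 ∈ T) :
    ⟪f, g⟫ = ∑ v ∈ T, u v * divg G (toFlow G r ⇑f) v := by
  classical
  set θ : V → V → ℝ := toFlow G r ⇑f with hθ
  have hθ0 : ∀ a b, θ a b ≠ 0 → a ∈ T ∧ b ∈ T := by
    intro a b hab
    by_cases h : G.Adj a b
    · have hf0 : f ⟨(a,b),h⟩ ≠ 0 := by
        intro hc
        exact hab (by rw [hθ, toFlow_adj _ h, hc, zero_div])
      exact hT _ hf0
    · exact absurd (toFlow_not_adj _ h) hab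
  set A : Finset (NetE G) := hfin.toFinset with hA
  have hmemA : ∀ e : NetE G, e ∈ A ↔ f e ≠ 0 := fun e => Set.Finite.mem_toFinset hfin
  -- inner product as a finite sum
  have step1 : ⟪f, g⟫ = ∑ e ∈ A, θ e.1.1 e.1.2 * (u e.1.1 - u e.1.2) / 2 := by
    rw [lp.inner_eq_tsum]
    rw [tsum_eq_sum (s := A) (fun e he => by
      rw [RCLike.inner_apply, starRingEnd_apply, star_trivial,
        not_ne_iff.1 (fun hc => he ((hmemA e).2 hc)), mul_zero])]
    refine Finset.sum_congr rfl fun e _ => ?_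
    rw [RCLike.inner_apply, starRingEnd_apply, star_trivial, hg e,
      ← ofFlow_toFlow hr_pos f e]
    have hrne : r e.1.1 e.1.2 ≠ 0 := (hr_pos _ _ e.2).ne'
    have hsq := netw_sq hr_pos e
    calc netw G r e * ((u e.1.1 - u e.1.2) / r e.1.1 e.1.2) *
          (netw G r e * toFlow G r (⇑f) e.1.1 e.1.2)
        = netw G r e ^ 2 * (toFlow G r (⇑f) e.1.1 e.1.2 *
            ((u e.1.1 - u e.1.2) / r e.1.1 e.1.2)) := by ring
      _ = r e.1.1 e.1.2 / 2 * (toFlow G r (⇑f) e.1.1 e.1.2 *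
            ((u e.1.1 - u e.1.2) / r e.1.1 e.1.2)) := by rw [hsq]
      _ = θ e.1.1 e.1.2 * (u e.1.1 - u e.1.2) / 2 := by
            rw [hθ]; field_simp
  -- extend to the product `T ×ˢ T`
  have step2 : ∑ e ∈ A, θ e.1.1 e.1.2 * (u e.1.1 - u e.1.2)
      = ∑ x ∈ T ×ˢ T, θ x.1 x.2 * (u x.1 - u x.2) := by
    have hinj : ∀ x ∈ A, ∀ y ∈ A, (Subtype.val x : V × V) = Subtype.val y → x = y :=
      fun x _ y _ hxy => Subtype.ext hxy
    have himg : ∑ x ∈ A.image Subtype.val, (fun x : V × V => θ x.1 x.2 * (u x.1 - u x.2)) x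
        = ∑ e ∈ A, θ (e : V × V).1 (e : V × V).2 * (u (e : V × V).1 - u (e : V × V).2) :=
      Finset.sum_image hinj
    rw [← himg]
    refine Finset.sum_subset ?_ ?_
    · intro x hx
      simp only [Finset.mem_image] at hx
      obtain ⟨e, he, rfl⟩ := hx
      have := hT e ((hmemA e).1 he)
      exact Finset.mem_product.2 this
    · intro x _ hx
      have hx0 : θ x.1 x.2 = 0 := by
        by_cases h : G.Adj x.1 x.2
        · have : f ⟨x, h⟩ = 0 := by
            by_contra hc
            exact hx (Finset.mem_image.2 ⟨⟨x, h⟩, (hmemA _).2 hc, rfl⟩)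
          rw [hθ, toFlow_adj _ h]
          have hxx : (⟨(x.1, x.2), h⟩ : NetE G) = ⟨x, h⟩ := by
            congr
          rw [hxx, this, zero_div]
        · exact toFlow_not_adj _ h
      rw [hx0, zero_mul]
  -- the double sum identity
  have hanti : ∀ a b, θ b a = -θ a b := fun a b => toFlow_antisym hr_symm hfa a b
  have step3 : ∑ x ∈ T ×ˢ T, θ x.1 x.2 * (u x.1 - u x.2)
      = 2 * ∑ a ∈ T, u a * (∑ b ∈ T, θ a b) := by
    rw [Finset.sum_product]
    have e1 : ∀ a ∈ T, ∑ b ∈ T, θ a b * (u a - u b)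
        = (∑ b ∈ T, θ a b * u a) - ∑ b ∈ T, θ a b * u b := by
      intro a _
      rw [← Finset.sum_sub_distrib]
      exact Finset.sum_congr rfl fun b _ => by ring
    rw [Finset.sum_congr rfl e1, Finset.sum_sub_distrib]
    have e2 : ∑ a ∈ T, ∑ b ∈ T, θ a b * u b = - ∑ a ∈ T, ∑ b ∈ T, θ a b * u a := by
      rw [Finset.sum_comm]
      rw [← Finset.sum_neg_distrib]
      refine Finset.sum_congr rfl fun b _ => ?_
      rw [← Finset.sum_neg_distrib]
      refine Finset.sum_congr rfl fun a _ => ?_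
      rw [hanti b a]
      ring
    rw [e2, sub_neg_eq_add, Finset.mul_sum, ← Finset.sum_add_distrib]
    refine Finset.sum_congr rfl fun a _ => ?_
    rw [← Finset.sum_mul]
    ring
  -- row sums are divergences
  have step4 : ∀ a, ∑ b ∈ T, θ a b = divg G θ a := by
    intro a
    have h1 : ∑ b ∈ T, θ a b = ∑ b ∈ T ∪ G.neighborFinset a, θ a b := by
      refine Finset.sum_subset Finset.subset_union_left fun b _ hbT => ?_
      by_contra hc
      exact hbT (hθ0 a b hc).2
    have h2 : ∑ b ∈ G.neighborFinset a, θ a b = ∑ b ∈ T ∪ G.neighborFinset a, θ a b := by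
      refine Finset.sum_subset Finset.subset_union_right fun b _ hbN => ?_
      exact toFlow_not_adj _ (fun hc => hbN ((SimpleGraph.mem_neighborFinset G a b).2 hc))
    rw [h1, show divg G θ a = ∑ b ∈ G.neighborFinset a, θ a b from rfl, h2]
  have step5 : ∑ e ∈ A, θ e.1.1 e.1.2 * (u e.1.1 - u e.1.2) / 2
      = (∑ e ∈ A, θ e.1.1 e.1.2 * (u e.1.1 - u e.1.2)) / 2 := by
    rw [Finset.sum_div]
  rw [step1, step5, step2, step3]
  rw [show (2 : ℝ) * (∑ a ∈ T, u a * ∑ b ∈ T, θ a b) / 2 = ∑ a ∈ T, u a * ∑ b ∈ T, θ a b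
    by ring]
  exact Finset.sum_congr rfl fun a _ => by rw [step4]

open Classical in
lemma pointSource_eq {p q v : V} (hpq : p ≠ q) :
    pointSource p q v = (if v = p then 1 else 0) - (if v = q then 1 else 0) := by
  classical
  unfold pointSource
  by_cases hp : v = p
  · subst hp
    rw [if_pos rfl, if_pos rfl, if_neg hpq]
    norm_num
  · rw [if_neg hp, if_neg hp]
    by_cases hq : v = q
    · rw [if_pos hq, if_pos hq]; norm_num
    · rw [if_neg hq, if_neg hq]; norm_num

/-- Pythagoras-type inequality. -/
lemma pyth_norm_le {H : Type*} [NormedAddCommGroup H] [InnerProductSpace ℝ H]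
    (M : Submodule ℝ H) {i g : H} (hi : ∀ y ∈ M, ⟪i, y⟫ = 0) (hg : g - i ∈ M) :
    ‖g‖^2 = ‖i‖^2 + ‖g - i‖^2 := by
  have h := norm_add_sq_real i (g - i)
  rw [hi _ hg] at h
  simpa [add_sub_cancel] using h

lemma pyth_eq {H : Type*} [NormedAddCommGroup H] [InnerProductSpace ℝ H]
    (M : Submodule ℝ H) {i g : H} (hi : ∀ y ∈ M, ⟪i, y⟫ = 0) (hg : g - i ∈ M)
    (hnorm : ‖g‖ = ‖i‖) : g = i := by
  have h := pyth_norm_le M hi hg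
  rw [hnorm] at h
  have : ‖g - i‖^2 = 0 := by linarith
  have : ‖g - i‖ = 0 := by
    nlinarith [norm_nonneg (g - i)]
  rw [← sub_eq_zero]
  exact norm_eq_zero.1 this

end NetAux5


section NetAux6

variable {V : Type*} {G : SimpleGraph V} {r : V → V → ℝ}

open scoped ENNReal RealInnerProductSpace

lemma netAsym_sub {f g : NetH G} (hf : NetAsym G ⇑f) (hg : NetAsym G ⇑g) :
    NetAsym G ⇑(f - g) := by
  intro a b h
  rw [lp.coeFn_sub]
  simp only [Pi.sub_apply, hf a b h, hg a b h]
  ring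

lemma toFlow_sub (f g : NetE G → ℝ) (a b : V) :
    toFlow G r (f - g) a b = toFlow G r f a b - toFlow G r g a b := by
  by_cases h : G.Adj a b
  · simp [toFlow_adj _ h, sub_div]
  · simp [toFlow_not_adj _ h]

lemma divg_toFlow_sub [G.LocallyFinite] (f g : NetE G → ℝ) (v : V) :
    divg G (toFlow G r (f - g)) v = divg G (toFlow G r f) v - divg G (toFlow G r g) v := by
  simp only [divg, toFlow_sub, Finset.sum_sub_distrib]

variable (G) in
open Classical in
/-- The set of endpoints of the support of a finitely-supported edge function. -/
noncomputable def endpts {f : NetE G → ℝ} (hfin : (Function.support f).Finite) : Finset V :=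
  hfin.toFinset.image (fun e : NetE G => (e : V × V).1) ∪
    hfin.toFinset.image (fun e : NetE G => (e : V × V).2)

lemma mem_endpts {f : NetE G → ℝ} (hfin : (Function.support f).Finite) (e : NetE G)
    (he : f e ≠ 0) : (e : V × V).1 ∈ endpts G hfin ∧ (e : V × V).2 ∈ endpts G hfin := by
  classical
  unfold endpts
  constructor
  · exact Finset.mem_union_left _ (Finset.mem_image.2 ⟨e, hfin.mem_toFinset.2 he, rfl⟩)
  · exact Finset.mem_union_right _ (Finset.mem_image.2 ⟨e, hfin.mem_toFinset.2 he, rfl⟩)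

lemma sum_pointSource {p q : V} (hpq : p ≠ q) (u : V → ℝ) (T : Finset V)
    (hp : p ∈ T) (hq : q ∈ T) :
    ∑ v ∈ T, u v * pointSource p q v = u p - u q := by
  classical
  have hcong : ∀ v ∈ T, u v * pointSource p q v
      = (if v = p then u p else 0) + (if v = q then -u q else 0) := by
    intro v _
    unfold pointSource
    by_cases hvp : v = p
    · subst hvp
      rw [if_pos rfl, if_pos rfl, if_neg (fun hc : v = q => hpq (hc ▸ rfl)), mul_one, add_zero]
    · rw [if_neg hvp, if_neg hvp]
      by_cases hvq : v = q
      · subst hvq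
        rw [if_pos rfl, if_pos rfl, zero_add, mul_neg, mul_one]
      · rw [if_neg hvq, if_neg hvq, mul_zero, add_zero]
  rw [Finset.sum_congr rfl hcong, Finset.sum_add_distrib,
    Finset.sum_ite_eq' T p (fun _ => u p), Finset.sum_ite_eq' T q (fun _ => -u q),
    if_pos hp, if_pos hq]
  ring

/-- Summation by parts for a finitely supported unit flow. -/
lemma inner_unitflow [G.LocallyFinite] (hr_pos : ∀ u v, G.Adj u v → 0 < r u v)
    (hr_symm : ∀ u v, r u v = r v u) {p q : V} (hpq : p ≠ q) (f g : NetH G)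
    (hfin : (Function.support ⇑f).Finite) (hfa : NetAsym G ⇑f)
    (hdiv : ∀ v, divg G (toFlow G r ⇑f) v = pointSource p q v) (u : V → ℝ)
    (hg : ∀ e : NetE G, g e = netw G r e * ((u e.1.1 - u e.1.2) / r e.1.1 e.1.2)) :
    ⟪f, g⟫ = u p - u q := by
  classical
  set T : Finset V := endpts G hfin ∪ {p, q} with hT
  have hmem : ∀ e : NetE G, f e ≠ 0 → (e : V × V).1 ∈ T ∧ (e : V × V).2 ∈ T := by
    intro e he
    exact ⟨Finset.mem_union_left _ (mem_endpts hfin e he).1,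
      Finset.mem_union_left _ (mem_endpts hfin e he).2⟩
  rw [inner_eq_sum_parts hr_pos hr_symm f g hfin hfa u hg T hmem]
  have hsum : ∀ v ∈ T, u v * divg G (toFlow G r ⇑f) v = u v * pointSource p q v :=
    fun v _ => by rw [hdiv v]
  rw [Finset.sum_congr rfl hsum]
  exact sum_pointSource hpq u T
    (Finset.mem_union_right _ (by simp)) (Finset.mem_union_right _ (by simp))

/-- Summation by parts for a finitely supported sourceless flow. -/
lemma inner_sourceless [G.LocallyFinite] (hr_pos : ∀ u v, G.Adj u v → 0 < r u v)
    (hr_symm : ∀ u v, r u v = r v u) (f g : NetH G) (hf : f ∈ NetW0 G r) (u : V → ℝ)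
    (hg : ∀ e : NetE G, g e = netw G r e * ((u e.1.1 - u e.1.2) / r e.1.1 e.1.2)) :
    ⟪f, g⟫ = 0 := by
  classical
  obtain ⟨⟨hfa, hfd⟩, hfin⟩ := hf
  have hmem : ∀ e : NetE G, f e ≠ 0 →
      (e : V × V).1 ∈ endpts G hfin ∧ (e : V × V).2 ∈ endpts G hfin :=
    fun e he => mem_endpts hfin e he
  rw [inner_eq_sum_parts hr_pos hr_symm f g hfin hfa u hg _ hmem]
  exact Finset.sum_eq_zero fun v _ => by rw [hfd v, mul_zero]

lemma inner_zero_on_closure {H : Type*} [NormedAddCommGroup H] [InnerProductSpace ℝ H]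
    (M : Submodule ℝ H) (g : H) (h : ∀ x ∈ M, ⟪x, g⟫ = 0) :
    ∀ x ∈ M.topologicalClosure, ⟪x, g⟫ = 0 := by
  intro x hx
  have hclosed : IsClosed {y : H | ⟪y, g⟫ = 0} :=
    isClosed_eq (Continuous.inner continuous_id continuous_const) continuous_const
  have hsub : closure (M : Set H) ⊆ {y : H | ⟪y, g⟫ = 0} :=
    closure_minimal (fun y hy => h y hy) hclosed
  have hcoe : (M.topologicalClosure : Set H) = closure (M : Set H) :=
    Submodule.topologicalClosure_coe M
  exact hsub (hcoe ▸ hx)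

end NetAux6


section NetAux7

variable {V : Type*} {G : SimpleGraph V} {r : V → V → ℝ}

open scoped ENNReal RealInnerProductSpace

lemma oddRes_eq_of_min [G.LocallyFinite] (hr_pos : ∀ u v, G.Adj u v → 0 < r u v)
    (hr_symm : ∀ u v, r u v = r v u) {p q : V} (θ₀ iF : NetH G)
    (hθ₀asym : NetAsym G ⇑θ₀)
    (hθ₀div : ∀ v, divg G (toFlow G r ⇑θ₀) v = pointSource p q v)
    (hmemF : θ₀ - iF ∈ NetW G r)
    (horthF : ∀ y ∈ NetW G r, ⟪iF, y⟫ = 0) :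
    oddRes G r p q = ENNReal.ofReal (‖iF‖^2) := by
  have hee : θ₀ - (θ₀ - iF) = iF := sub_sub_cancel θ₀ iF
  apply le_antisymm
  · have hasymF : NetAsym G ⇑iF := by
      have h := netAsym_sub hθ₀asym hmemF.1
      rwa [hee] at h
    have hflowF : IsFlow G (toFlow G r ⇑iF) := isFlow_toFlow hr_symm hasymF
    have hdivF : divg G (toFlow G r ⇑iF) = pointSource p q := by
      funext v
      rw [← hee, lp.coeFn_sub, divg_toFlow_sub, hθ₀div v, hmemF.2 v, sub_zero]
    have hE : energy r (toFlow G r ⇑iF) = ENNReal.ofReal (‖iF‖^2) := energy_toFlow hr_pos iF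
    calc oddRes G r p q ≤ ⨅ (_ : IsFlow G (toFlow G r ⇑iF) ∧ energy r (toFlow G r ⇑iF) ≠ ⊤ ∧
          divg G (toFlow G r ⇑iF) = pointSource p q), energy r (toFlow G r ⇑iF) :=
        iInf_le _ _
      _ = energy r (toFlow G r ⇑iF) :=
        iInf_pos ⟨hflowF, by rw [hE]; exact ENNReal.ofReal_ne_top, hdivF⟩
      _ = ENNReal.ofReal (‖iF‖^2) := hE
  · refine le_iInf fun θ => le_iInf fun hP => ?_
    obtain ⟨hflow, hfin, hdiv⟩ := hP
    obtain ⟨f, hf1, hf2, hf3, -⟩ := exists_rep hr_pos hr_symm hflow hfin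
    rw [hf2]
    have h1 : θ₀ - f ∈ NetW G r := by
      refine ⟨netAsym_sub hθ₀asym hf3, fun v => ?_⟩
      rw [lp.coeFn_sub, divg_toFlow_sub, hθ₀div v, hf1, hdiv, sub_self]
    have hmem : f - iF ∈ NetW G r := by
      have he2 : f - iF = (θ₀ - iF) - (θ₀ - f) := by abel
      rw [he2]
      exact Submodule.sub_mem _ hmemF h1
    have hpy := pyth_norm_le (NetW G r) horthF hmem
    exact ENNReal.ofReal_le_ofReal (by nlinarith [sq_nonneg ‖f - iF‖])

lemma evenRes_eq_of_min [G.LocallyFinite] (hr_pos : ∀ u v, G.Adj u v → 0 < r u v)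
    (hr_symm : ∀ u v, r u v = r v u) {p q : V} (θ₀ iW : NetH G)
    (hθ₀asym : NetAsym G ⇑θ₀)
    (hθ₀div : ∀ v, divg G (toFlow G r ⇑θ₀) v = pointSource p q v)
    (hθ₀fin : (Function.support ⇑θ₀).Finite)
    (hmemW : θ₀ - iW ∈ (NetW0 G r).topologicalClosure)
    (horthW : ∀ y ∈ (NetW0 G r).topologicalClosure, ⟪iW, y⟫ = 0) :
    evenRes G r p q = ENNReal.ofReal (‖iW‖^2) := by
  classical
  apply le_antisymm
  · -- upper bound by approximation with finitely supported flows
    refine ENNReal.le_of_forall_pos_le_add fun ε hε _ => ?_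
    set a : ℝ := ‖iW‖ with ha'
    have ha : 0 ≤ a := norm_nonneg _
    have hεR : (0:ℝ) < ε := hε
    set δ : ℝ := min 1 (ε / (2*a + 1)) with hδ'
    have hδpos : 0 < δ := lt_min one_pos (div_pos hεR (by linarith))
    have hcl : θ₀ - iW ∈ closure ((NetW0 G r : Set (NetH G))) := by
      rw [← Submodule.topologicalClosure_coe]
      exact hmemW
    obtain ⟨x, hxmem, hxdist⟩ := Metric.mem_closure_iff.1 hcl δ hδpos
    obtain ⟨⟨hxasym, hxdiv⟩, hxfin⟩ := hxmem
    set f : NetH G := θ₀ - x with hfdef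
    have hfnorm : ‖f‖ ≤ a + δ := by
      have he1 : iW + (f - iW) = f := by abel
      have he2 : f - iW = (θ₀ - iW) - x := by rw [hfdef]; abel
      calc ‖f‖ = ‖iW + (f - iW)‖ := by rw [he1]
        _ ≤ ‖iW‖ + ‖f - iW‖ := norm_add_le _ _
        _ ≤ a + δ := by
            have : ‖f - iW‖ = dist (θ₀ - iW) x := by rw [he2, dist_eq_norm]
            rw [this]
            exact add_le_add le_rfl hxdist.le
    have hfasym : NetAsym G ⇑f := netAsym_sub hθ₀asym hxasym
    have hffin : (Function.support ⇑f).Finite := by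
      refine (hθ₀fin.union hxfin).subset ?_
      rw [hfdef, lp.coeFn_sub]
      exact Function.support_sub _ _
    have hfdiv : ∀ v, divg G (toFlow G r ⇑f) v = pointSource p q v := by
      intro v
      rw [hfdef, lp.coeFn_sub, divg_toFlow_sub, hxdiv v, sub_zero, hθ₀div v]
    set S : Finset V := endpts G hffin ∪ {p, q} with hSdef
    have hpS : p ∈ S := Finset.mem_union_right _ (by simp)
    have hqS : q ∈ S := Finset.mem_union_right _ (by simp)
    have hcut : ∀ u v, (u ∉ S ∨ v ∉ S) → toFlow G r ⇑f u v = 0 := by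
      intro u v huv
      by_contra hc
      by_cases h : G.Adj u v
      · have hne : f ⟨(u,v),h⟩ ≠ 0 := by
          intro h0
          exact hc (by rw [toFlow_adj _ h, h0, zero_div])
        have hm := mem_endpts hffin ⟨(u,v),h⟩ hne
        rcases huv with hu | hv
        · exact hu (Finset.mem_union_left _ hm.1)
        · exact hv (Finset.mem_union_left _ hm.2)
      · exact hc (toFlow_not_adj _ h)
    have h1 : evenRes G r p q ≤ cutRes G r p q S := by
      calc evenRes G r p q ≤ ⨅ (_ : p ∈ S ∧ q ∈ S), cutRes G r p q S := iInf_le _ _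
        _ = cutRes G r p q S := iInf_pos ⟨hpS, hqS⟩
    have h2 : cutRes G r p q S ≤ energy r (toFlow G r ⇑f) := by
      calc cutRes G r p q S ≤ ⨅ (_ : IsFlow G (toFlow G r ⇑f) ∧
            divg G (toFlow G r ⇑f) = pointSource p q ∧
            ∀ u v, (u ∉ S ∨ v ∉ S) → toFlow G r ⇑f u v = 0), energy r (toFlow G r ⇑f) :=
          iInf_le _ _
        _ = energy r (toFlow G r ⇑f) :=
          iInf_pos ⟨isFlow_toFlow hr_symm hfasym, funext hfdiv, hcut⟩
    have h3 : energy r (toFlow G r ⇑f) = ENNReal.ofReal (‖f‖^2) := energy_toFlow hr_pos f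
    have h4 : ‖f‖^2 ≤ a^2 + ε := by
      have hδ1 : δ ≤ 1 := min_le_left _ _
      have hδ2 : δ ≤ ε / (2*a + 1) := min_le_right _ _
      have hδ3 : δ * (2*a + 1) ≤ ε := by
        rw [← le_div_iff₀ (by linarith : (0:ℝ) < 2*a + 1)]
        exact hδ2
      nlinarith [hfnorm, ha, hδpos.le, norm_nonneg f]
    calc evenRes G r p q ≤ ENNReal.ofReal (‖f‖^2) := h1.trans (h2.trans_eq h3)
      _ ≤ ENNReal.ofReal (a^2 + ε) := ENNReal.ofReal_le_ofReal h4
      _ = ENNReal.ofReal (a^2) + ENNReal.ofReal ε :=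
          ENNReal.ofReal_add (sq_nonneg _) (by positivity)
      _ = ENNReal.ofReal (‖iW‖^2) + ε := by rw [ENNReal.ofReal_coe_nnreal]
  · refine le_iInf fun S => le_iInf fun hS => le_iInf fun θ => le_iInf fun hP => ?_
    obtain ⟨hflow, hdiv, hcut⟩ := hP
    by_cases hfin : energy r θ = ⊤
    · rw [hfin]; exact le_top
    obtain ⟨f, hf1, hf2, hf3, hf4⟩ := exists_rep hr_pos hr_symm hflow hfin
    rw [hf2]
    have hsupp : (Function.support ⇑f).Finite := by
      have hsub : Function.support ⇑f ⊆
          Subtype.val ⁻¹' (((S : Set V)) ×ˢ ((S : Set V))) := by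
        intro e he
        simp only [Function.mem_support] at he
        rw [hf4] at he
        have hθne : θ (e : V × V).1 (e : V × V).2 ≠ 0 := fun hc => he (by rw [hc, mul_zero])
        by_contra hc
        simp only [Set.mem_preimage, Set.mem_prod, not_and_or] at hc
        exact hθne (hcut _ _ (hc.imp (fun h => by simpa using h) (fun h => by simpa using h)))
      refine Set.Finite.subset (Set.Finite.preimage (Subtype.val_injective.injOn) ?_) hsub
      exact (S.finite_toSet.prod S.finite_toSet)
    have hmem0 : θ₀ - f ∈ NetW0 G r := by
      refine ⟨⟨netAsym_sub hθ₀asym hf3, fun v => ?_⟩, ?_⟩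
      · rw [lp.coeFn_sub, divg_toFlow_sub, hθ₀div v, hf1, hdiv, sub_self]
      · rw [lp.coeFn_sub]
        exact (hθ₀fin.union hsupp).subset (Function.support_sub _ _)
    have hmem : f - iW ∈ (NetW0 G r).topologicalClosure := by
      have he2 : f - iW = (θ₀ - iW) - (θ₀ - f) := by abel
      rw [he2]
      exact Submodule.sub_mem _ hmemW (Submodule.le_topologicalClosure _ hmem0)
    have hpy := pyth_norm_le ((NetW0 G r).topologicalClosure) horthW hmem
    exact ENNReal.ofReal_le_ofReal (by nlinarith [sq_nonneg ‖f - iW‖])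

end NetAux7


section NetAux8

variable {V : Type*} {G : SimpleGraph V} {r : V → V → ℝ}

open scoped ENNReal RealInnerProductSpace

lemma fnEnergy_eq_tsum (hr_pos : ∀ u v, G.Adj u v → 0 < r u v) (u : V → ℝ) :
    fnEnergy G r u = ∑' e : NetE G,
      ENNReal.ofReal ((netw G r e * ((u e.1.1 - u e.1.2) / r e.1.1 e.1.2))^2) := by
  classical
  have hsupp : Function.support (fun x : V × V =>
      if G.Adj x.1 x.2 then ENNReal.ofReal ((u x.1 - u x.2) ^ 2 / r x.1 x.2) else 0)
      ⊆ {x : V × V | G.Adj x.1 x.2} := by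
    intro x hx
    by_contra hadj
    simp only [Function.mem_support] at hx
    exact hx (if_neg hadj)
  unfold fnEnergy
  rw [← tsum_subtype_eq_of_support_subset hsupp, ← ENNReal.tsum_mul_left]
  refine tsum_congr fun e => ?_
  have hr : 0 < r e.1.1 e.1.2 := hr_pos _ _ e.2
  rw [if_pos (show G.Adj (e : V × V).1 (e : V × V).2 from e.2), mul_pow, netw_sq hr_pos]
  rw [show r e.1.1 e.1.2 / 2 * ((u e.1.1 - u e.1.2) / r e.1.1 e.1.2)^2
      = 2⁻¹ * ((u e.1.1 - u e.1.2) ^ 2 / r e.1.1 e.1.2) from by field_simp]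
  rw [ENNReal.ofReal_mul (by norm_num : (0:ℝ) ≤ 2⁻¹)]
  congr 1
  rw [show ((2:ℝ)⁻¹) = ((2:ℝ≥0∞).toReal)⁻¹ by norm_num, ← ENNReal.toReal_inv,
    ENNReal.ofReal_toReal (by simp)]

lemma fnEnergy_eq_energy [G.LocallyFinite] (hr_pos : ∀ u v, G.Adj u v → 0 < r u v)
    {ζ : NetH G} {u : V → ℝ}
    (hgrad : ∀ a b, G.Adj a b → u a - u b = r a b * toFlow G r ⇑ζ a b) :
    fnEnergy G r u = energy r (toFlow G r ⇑ζ) := by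
  classical
  unfold fnEnergy energy
  congr 1
  refine tsum_congr fun x => ?_
  by_cases h : G.Adj x.1 x.2
  · rw [if_pos h, hgrad _ _ h]
    congr 1
    have hr : r x.1 x.2 ≠ 0 := (hr_pos _ _ h).ne'
    field_simp
  · rw [if_neg h, toFlow_not_adj _ h]
    norm_num

end NetAux8



open scoped RealInnerProductSpace in
/-- `even_res(p,q) = odd_res(p,q)` iff every finite-energy harmonic function `u`
satisfies `u p = u q`. -/
theorem evenRes_eq_oddRes_iff
    (G : SimpleGraph V) [G.LocallyFinite] (hG : G.Connected)
    (r : V → V → ℝ) (hr_pos : ∀ u v, G.Adj u v → 0 < r u v)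
    (hr_symm : ∀ u v, r u v = r v u)
    (p q : V) (hpq : p ≠ q) :
    evenRes G r p q = oddRes G r p q ↔
      ∀ u : V → ℝ, Harmonic G r u → fnEnergy G r u ≠ ⊤ → u p = u q := by
  classical
  obtain ⟨w⟩ : Nonempty (G.Walk p q) := hG.preconnected p q
  set θ₀ : NetH G := walkEl G r w with hθ₀def
  have hθ₀fin : (Function.support ⇑θ₀).Finite := walkEl_support_finite w
  have hθ₀asym : NetAsym G ⇑θ₀ := netAsym_walkEl hr_pos hr_symm w
  have hθ₀div : ∀ v, divg G (toFlow G r ⇑θ₀) v = pointSource p q v := by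
    intro v
    rw [hθ₀def, divg_toFlow_walkEl hr_pos]
    exact (pointSource_eq hpq).symm
  -- minimizers over the two subspaces
  have hWcomp : IsComplete ((NetW G r : Set (NetH G))) := netW_closed.isComplete
  set Wc : Submodule ℝ (NetH G) := (NetW0 G r).topologicalClosure with hWcdef
  have hWccomp : IsComplete ((Wc : Set (NetH G))) :=
    (Submodule.isClosed_topologicalClosure _).isComplete
  have hWc_le_W : Wc ≤ NetW G r :=
    Submodule.topologicalClosure_minimal _ NetW0_le_NetW netW_closed
  obtain ⟨vF, hvF, hvFmin⟩ :=
    Submodule.exists_norm_eq_iInf_of_complete_subspace (NetW G r) hWcomp θ₀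
  have horthF : ∀ y ∈ NetW G r, ⟪θ₀ - vF, y⟫ = 0 :=
    (Submodule.norm_eq_iInf_iff_real_inner_eq_zero (NetW G r) hvF).1 hvFmin
  obtain ⟨vW, hvW, hvWmin⟩ := Submodule.exists_norm_eq_iInf_of_complete_subspace Wc hWccomp θ₀
  have horthW : ∀ y ∈ Wc, ⟪θ₀ - vW, y⟫ = 0 :=
    (Submodule.norm_eq_iInf_iff_real_inner_eq_zero Wc hvW).1 hvWmin
  set iF : NetH G := θ₀ - vF with hiFdef
  set iW : NetH G := θ₀ - vW with hiWdef
  have hmemF : θ₀ - iF ∈ NetW G r := by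
    rw [hiFdef, sub_sub_cancel]
    exact hvF
  have hmemW : θ₀ - iW ∈ Wc := by
    rw [hiWdef, sub_sub_cancel]
    exact hvW
  have hodd : oddRes G r p q = ENNReal.ofReal (‖iF‖^2) :=
    oddRes_eq_of_min hr_pos hr_symm θ₀ iF hθ₀asym hθ₀div hmemF horthF
  have heven : evenRes G r p q = ENNReal.ofReal (‖iW‖^2) :=
    evenRes_eq_of_min hr_pos hr_symm θ₀ iW hθ₀asym hθ₀div hθ₀fin hmemW horthW
  have hsubW : iW - iF ∈ NetW G r := by
    have he : iW - iF = vF - vW := by rw [hiWdef, hiFdef]; abel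
    rw [he]
    exact Submodule.sub_mem _ hvF (hWc_le_W hvW)
  constructor
  · -- evenRes = oddRes → harmonic Dirichlet functions agree at p, q
    intro heq u huharm hufin
    have hsq : ‖iW‖^2 = ‖iF‖^2 := by
      have h := heq
      rw [hodd, heven] at h
      exact (ENNReal.ofReal_eq_ofReal_iff (sq_nonneg _) (sq_nonneg _)).1 h
    have hnorm : ‖iW‖ = ‖iF‖ := by
      nlinarith [norm_nonneg iW, norm_nonneg iF]
    have hiWF : iW = iF := pyth_eq (NetW G r) horthF hsubW hnorm
    -- gradient element of u
    set gfun : NetE G → ℝ :=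
      fun e => netw G r e * ((u e.1.1 - u e.1.2) / r e.1.1 e.1.2) with hgfun
    have hmemg : Memℓp gfun 2 := by
      refine memℓp_of_tsum_ne_top ?_
      rw [← fnEnergy_eq_tsum hr_pos]
      exact hufin
    set g : NetH G := ⟨gfun, hmemg⟩ with hgdef
    have hgcoe : ∀ e, (⇑g) e = gfun e := fun _ => rfl
    have hgform : ∀ e : NetE G,
        g e = netw G r e * ((u e.1.1 - u e.1.2) / r e.1.1 e.1.2) := fun e => hgcoe e
    have hgW : g ∈ NetW G r := by
      constructor
      · intro a b h
        rw [hgcoe, hgcoe]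
        simp only [hgfun]
        rw [netw_symm hr_symm h]
        rw [show r b a = r a b from hr_symm b a]
        ring
      · intro v
        have hterm : ∀ x ∈ G.neighborFinset v,
            toFlow G r (⇑g) v x = (u v - u x) / r v x := by
          intro x hx
          have hadj : G.Adj v x := (SimpleGraph.mem_neighborFinset G v x).1 hx
          rw [toFlow_adj _ hadj, hgcoe]
          simp only [hgfun]
          rw [mul_div_cancel_left₀ _ (netw_pos hr_pos _).ne']
        rw [show divg G (toFlow G r ⇑g) v
            = ∑ x ∈ G.neighborFinset v, toFlow G r (⇑g) v x from rfl,
          Finset.sum_congr rfl hterm]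
        exact huharm v
    have e1 : ⟪iF, g⟫ = 0 := horthF g hgW
    have e2 : ⟪θ₀, g⟫ = u p - u q :=
      inner_unitflow hr_pos hr_symm hpq θ₀ g hθ₀fin hθ₀asym hθ₀div u hgform
    have e3 : ⟪vW, g⟫ = 0 :=
      inner_zero_on_closure (NetW0 G r) g
        (fun x hx => inner_sourceless hr_pos hr_symm x g hx u hgform) vW hvW
    have e4 : ⟪iW, g⟫ = u p - u q := by
      rw [hiWdef, inner_sub_left, e2, e3, sub_zero]
    have : u p - u q = 0 := by
      rw [← e4, hiWF, e1]
    linarith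
  · -- harmonic Dirichlet functions agree at p, q → evenRes = oddRes
    intro hu
    set ζ : NetH G := iW - iF with hζdef
    have hζW : ζ ∈ NetW G r := hsubW
    have hζorth : ∀ x ∈ NetW0 G r, ⟪x, ζ⟫ = 0 := by
      intro x hx
      rw [hζdef, inner_sub_right]
      have h1 : ⟪x, iW⟫ = 0 := by
        rw [real_inner_comm]
        exact horthW x (Submodule.le_topologicalClosure _ hx)
      have h2 : ⟪x, iF⟫ = 0 := by
        rw [real_inner_comm]
        exact horthF x (NetW0_le_NetW hx)
      rw [h1, h2, sub_zero]
    -- construct the potential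
    set cw : ∀ v : V, G.Walk p v := fun v => (hG.preconnected p v).some with hcw
    set u0 : V → ℝ := fun v => -⟪walkEl G r (cw v), ζ⟫ with hu0
    have hkey : ∀ (a b : V) (h : G.Adj a b), u0 a - u0 b = r a b * toFlow G r ⇑ζ a b := by
      intro a b h
      set W2 : G.Walk p b := (cw a).append (SimpleGraph.Walk.cons h SimpleGraph.Walk.nil)
        with hW2def
      have hx : walkEl G r (cw b) - walkEl G r W2 ∈ NetW0 G r := by
        refine ⟨⟨netAsym_sub (netAsym_walkEl hr_pos hr_symm _)
          (netAsym_walkEl hr_pos hr_symm _), fun v => ?_⟩, ?_⟩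
        · rw [lp.coeFn_sub, divg_toFlow_sub, divg_toFlow_walkEl hr_pos,
            divg_toFlow_walkEl hr_pos, sub_self]
        · rw [lp.coeFn_sub]
          exact ((walkEl_support_finite _).union (walkEl_support_finite _)).subset
            (Function.support_sub _ _)
      have h0 := hζorth _ hx
      rw [inner_sub_left, sub_eq_zero] at h0
      have hW2 : walkEl G r W2 = walkEl G r (cw a) + edgeEl G r h := by
        rw [hW2def, walkEl_append, walkEl, walkEl, add_zero]
      have hcalc : u0 a - u0 b = ⟪walkEl G r (cw b), ζ⟫ - ⟪walkEl G r (cw a), ζ⟫ := by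
        rw [hu0]
        ring
      rw [hcalc, h0, hW2, inner_add_left, add_sub_cancel_left,
        inner_edgeEl_left hr_pos hr_symm h hζW.1]
    have hharm : Harmonic G r u0 := by
      intro v
      have hterm : ∀ x ∈ G.neighborFinset v, (u0 v - u0 x) / r v x = toFlow G r ⇑ζ v x := by
        intro x hx
        have hadj : G.Adj v x := (SimpleGraph.mem_neighborFinset G v x).1 hx
        rw [hkey v x hadj, mul_div_cancel_left₀ _ (hr_pos v x hadj).ne']
      rw [Finset.sum_congr rfl hterm]
      exact hζW.2 v
    have hfnE : fnEnergy G r u0 ≠ ⊤ := by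
      rw [fnEnergy_eq_energy hr_pos (fun a b h => hkey a b h), energy_toFlow hr_pos]
      exact ENNReal.ofReal_ne_top
    have hu0pq : u0 p = u0 q := hu u0 hharm hfnE
    have hζgrad : ∀ e : NetE G,
        ζ e = netw G r e * ((u0 e.1.1 - u0 e.1.2) / r e.1.1 e.1.2) := by
      intro e
      rw [hkey _ _ e.2, mul_div_cancel_left₀ _ (hr_pos _ _ e.2).ne', ofFlow_toFlow hr_pos]
    have hθ₀ζ : ⟪θ₀, ζ⟫ = u0 p - u0 q :=
      inner_unitflow hr_pos hr_symm hpq θ₀ ζ hθ₀fin hθ₀asym hθ₀div u0 hζgrad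
    have hiFζ : ⟪iF, ζ⟫ = 0 := horthF ζ hζW
    have hvWζ : ⟪vW, ζ⟫ = 0 :=
      inner_zero_on_closure (NetW0 G r) ζ hζorth vW hvW
    have hiWζ : ⟪iW, ζ⟫ = 0 := by
      rw [hiWdef, inner_sub_left, hθ₀ζ, hvWζ, hu0pq]
      ring
    have hnormζ : ‖ζ‖^2 = 0 := by
      have h1 : ⟪ζ, ζ⟫ = ‖ζ‖^2 := real_inner_self_eq_norm_sq ζ
      have h2 : ⟪ζ, ζ⟫ = ⟪iW, ζ⟫ - ⟪iF, ζ⟫ := by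
        rw [hζdef, inner_sub_left]
      rw [← h1, h2, hiWζ, hiFζ, sub_zero]
    have hζ0 : ζ = 0 := by
      have hn : ‖ζ‖ = 0 := by
        nlinarith [norm_nonneg ζ]
      exact norm_eq_zero.1 hn
    have hiWF : iW = iF := by
      rw [← sub_eq_zero]
      exact hζ0
    rw [hodd, heven, hiWF]
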